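/- arXiv:1301.6646 — 6 statements merged into one kernel-verified Lean document; each statement's English description precedes it below -/
import Mathlib

section
/- Assume that the map γ ↦ U(γ)φ is injective on G, that γ_1, …, γ_K are pairwise distinct, that δ_1, …, δ_K are pairwise distinct, and that all coefficients c_i and d_i are strictly positive. Assume further that every finite subfamily of {φ_χ : χ ∈ 𝒯_d} of cardinality at most 2K is linearly independent. If there exists η₀ ∈ G such that U(η₀)p = q and η₀ ∘ γ_i ∈ 𝒯_d for every i ∈ {1,…,K}, then for every i ∈ {1,…,K} there exists j ∈ {1,…,K} with η₀ ∘ γ_i = δ_j; in particular η₀ ∈ 𝒯_a^{p,q} and inf_{η ∈ 𝒯_a^{p,q}} ‖U(η)p − q‖ = 0. -/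
/-!
Transporting `p` by `η₀` gives `∑ cᵢ φ_{η₀γᵢ} = ∑ dⱼ φ_{δⱼ}`, a relation among at most `2K` atoms
of the dictionary, which are linearly independent. Comparing the coefficients of `φ_{η₀γᵢ}`, the
nonzero `cᵢ` must be matched on the right, so `η₀γᵢ = δⱼ` for some `j`.
-/

open Finset Function

section
variable {R M X ι κ : Type*} [Semiring R] [AddCommMonoid M] [Module R M]

theorem linearCombination_sum_single [Fintype ι] (v : X → M) (a : ι → X) (c : ι → R) :
    Finsupp.linearCombination R v (∑ i, Finsupp.single (a i) (c i)) = ∑ i, c i • v (a i) := by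
  simp [map_sum]

theorem sum_single_mem_supported [Fintype ι] {s : Set X} {a : ι → X} (has : ∀ i, a i ∈ s)
    (c : ι → R) : ∑ i, Finsupp.single (a i) (c i) ∈ Finsupp.supported R R s :=
  Submodule.sum_mem _ fun i _ => Finsupp.single_mem_supported R _ (has i)

theorem exists_eq_of_sum_smul_eq_sum_smul [Fintype ι] [Fintype κ] {v : X → M} {s : Set X}
    (hv : LinearIndepOn R v s) {a : ι → X} {b : κ → X} (ha : Injective a)
    (has : ∀ i, a i ∈ s) (hbs : ∀ j, b j ∈ s) {c : ι → R} (hc : ∀ i, c i ≠ 0) (d : κ → R)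
    (h : ∑ i, c i • v (a i) = ∑ j, d j • v (b j)) (i : ι) : ∃ j, a i = b j := by
  classical
  have hfinsupp := linearIndepOn_iffₛ.mp hv _ (sum_single_mem_supported has c) _
    (sum_single_mem_supported hbs d) (by rw [linearCombination_sum_single,
      linearCombination_sum_single, h])
  by_contra! hne
  have := DFunLike.congr_fun hfinsupp (a i)
  simp only [Finsupp.finsetSum_apply, Finsupp.single_apply, ha.eq_iff] at this
  exact hc i (by simpa [fun j => (hne j).symm] using this)

theorem linearIndepOn_of_forall_fin {v : X → M} {T : Set X} {N : ℕ}
    (h : ∀ n ≤ N, ∀ χ : Fin n → X, (∀ i, χ i ∈ T) → Injective χ → LinearIndependent R (v ∘ χ))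
    {S : Finset X} (hST : ↑S ⊆ T) (hS : S.card ≤ N) : LinearIndepOn R v S := by
  have := h S.card hS (fun i => S.equivFin.symm i) (fun i => hST (S.equivFin.symm i).2)
    (Subtype.val_injective.comp S.equivFin.symm.injective)
  exact (linearIndependent_equiv S.equivFin.symm).mp this

end

theorem sInf_image_norm_eq_zero {α E : Type*} [SeminormedAddCommGroup E] {f : α → E} {s : Set α}
    {x : α} (hx : x ∈ s) (hfx : f x = 0) : sInf ((fun y => ‖f y‖) '' s) = 0 :=
  IsLeast.csInf_eq ⟨⟨x, hx, by simp [hfx]⟩, by rintro _ ⟨y, -, rfl⟩; exact norm_nonneg _⟩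

theorem stmt2_general {H G : Type*} [NormedAddCommGroup H] [InnerProductSpace ℝ H]
    [Group G] (U : G →* (H ≃ₗᵢ[ℝ] H)) (φ : H) (Td : Set G)
    (K : ℕ) (hK : 1 ≤ K)
    (γ δ : Fin K → G) (hδTd : ∀ i, δ i ∈ Td)
    (hγinj : Function.Injective γ)
    (c d : Fin K → ℝ) (hc : ∀ i, 0 < c i)
    (p q : H) (hp : p = ∑ i, c i • U (γ i) φ) (hq : q = ∑ i, d i • U (δ i) φ)
    (hLI : ∀ n : ℕ, n ≤ 2 * K → ∀ χ : Fin n → G, (∀ i, χ i ∈ Td) →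
      Function.Injective χ → LinearIndependent ℝ fun i => U (χ i) φ)
    (η₀ : G) (hη₀ : U η₀ p = q) (hη₀Td : ∀ i, η₀ * γ i ∈ Td) :
    (∀ i, ∃ j, η₀ * γ i = δ j) ∧
    (∃ i j, η₀ = δ i * (γ j)⁻¹) ∧
    sInf ((fun η => ‖U η p - q‖) '' {η : G | ∃ i j, η = δ i * (γ j)⁻¹}) = 0 := by
  classical
  set S := (univ.image fun i => η₀ * γ i) ∪ univ.image δ
  have hS : S.card ≤ 2 * K :=
    calc S.card ≤ K + K := (card_union_le _ _).trans <| add_le_add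
          (card_image_le.trans_eq (card_fin K)) (card_image_le.trans_eq (card_fin K))
      _ = 2 * K := (two_mul K).symm
  have hST : ↑S ⊆ Td := by
    simp only [S, coe_union, coe_image, coe_univ, Set.image_univ]
    exact Set.union_subset (Set.range_subset_iff.mpr hη₀Td) (Set.range_subset_iff.mpr hδTd)
  have hrel : ∑ i, c i • U (η₀ * γ i) φ = ∑ j, d j • U (δ j) φ := by
    simp only [← hq, ← hη₀, hp, map_sum, map_smul, map_mul, LinearIsometryEquiv.coe_mul,
      Function.comp_apply]
  have hmaps : ∀ i, ∃ j, η₀ * γ i = δ j :=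
    exists_eq_of_sum_smul_eq_sum_smul (v := fun g => U g φ) (a := fun i => η₀ * γ i) (b := δ)
      (linearIndepOn_of_forall_fin hLI hST hS) ((mul_right_injective η₀).comp hγinj)
      (by simp [S]) (by simp [S]) (fun i => (hc i).ne') d hrel
  have hη₀mem : ∃ i j, η₀ = δ i * (γ j)⁻¹ := by
    obtain ⟨j, hj⟩ := hmaps ⟨0, hK⟩
    exact ⟨j, ⟨0, hK⟩, eq_mul_inv_of_mul_eq hj⟩
  exact ⟨hmaps, hη₀mem, sInf_image_norm_eq_zero hη₀mem (by simp [hη₀])⟩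

/-- with a linearly independent dictionary, if the sparse patterns
are exactly related by `η₀` (with atoms staying in the dictionary), then `η₀`
maps each atom of `p` to an atom of `q`; in particular `η₀` is a
feature-to-feature transformation and the approximate registration error is 0. -/
theorem stmt2 {H G : Type*} [NormedAddCommGroup H] [InnerProductSpace ℝ H]
    [Group G] (U : G →* (H ≃ₗᵢ[ℝ] H)) (φ : H) (Td : Set G)
    (hinj : Function.Injective fun γ : G => U γ φ)
    (K : ℕ) (hK : 1 ≤ K)
    (γ δ : Fin K → G) (hγTd : ∀ i, γ i ∈ Td) (hδTd : ∀ i, δ i ∈ Td)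
    (hγinj : Function.Injective γ) (hδinj : Function.Injective δ)
    (c d : Fin K → ℝ) (hc : ∀ i, 0 < c i) (hd : ∀ i, 0 < d i)
    (p q : H) (hp : p = ∑ i, c i • U (γ i) φ) (hq : q = ∑ i, d i • U (δ i) φ)
    (hLI : ∀ n : ℕ, n ≤ 2 * K → ∀ χ : Fin n → G, (∀ i, χ i ∈ Td) →
      Function.Injective χ → LinearIndependent ℝ fun i => U (χ i) φ)
    (η₀ : G) (hη₀ : U η₀ p = q) (hη₀Td : ∀ i, η₀ * γ i ∈ Td) :
    (∀ i, ∃ j, η₀ * γ i = δ j) ∧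
    (∃ i j, η₀ = δ i * (γ j)⁻¹) ∧
    sInf ((fun η => ‖U η p - q‖) '' {η : G | ∃ i j, η = δ i * (γ j)⁻¹}) = 0 :=
  stmt2_general U φ Td K hK γ δ hδTd hγinj c d hc p q hp hq hLI η₀ hη₀ hη₀Td
end

section
/- Assume: (i) ‖φ‖ = 1 and the map γ ↦ U(γ)φ is injective on G; (ii) ⟨φ_γ, φ_δ⟩ ≥ 0 for all γ, δ ∈ 𝒯_d; (iii) all coefficients c_i and d_i are strictly positive; (iv) there exists η₀ ∈ G with ‖U(η₀)p − q‖ ≤ ‖U(η)p − q‖ for every η ∈ G, and moreover η₀ ∘ γ_i ∈ 𝒯_d and η₀⁻¹ ∘ δ_i ∈ 𝒯_d for all i; (v) ‖U(η₀)p − q‖ < ε · √(‖c‖₂² + ‖d‖₂²) for some ε > 0; (vi) for some α with 0 ≤ α < √2, every family (φ_{χ_1}, …, φ_{χ_{2K}}) with χ_1, …, χ_{2K} ∈ 𝒯_d is (ε, α)-robustly linearly independent; (vii) there is ρ ≥ 0 such that for all γ, γ' ∈ 𝒯_d and all η ∈ G, ‖U(η)φ_{γ'} − φ_{γ'}‖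 ≤ ρ · ‖U(η)φ_γ − φ_γ‖ (the transformation inconsistency of the dictionary is at most ρ). Then inf_{η ∈ 𝒯_a^{p,q}} ‖U(η)p − q‖ − ‖U(η₀)p − q‖ ≤ α ρ · min(‖c‖₁, ‖d‖₁), where ‖c‖₁ = Σ_{i=1}^K |c_i| and ‖c‖₂ is the Euclidean norm. -/
/-!
RLI applied to the coefficient vector `(c, -d)` of `U η₀ p - q`, written in the dictionary
`(φ_{η₀ γ_k})_k ⧺ (φ_{δ_k})_k`, yields two atoms that nearly cancel after normalization. Since
the inner products of atoms are nonnegative, two atoms with coefficients of the same sign are at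
distance at least `√2 > α` from cancelling, so the pair is some `φ_{η₀ γ_j}` and `φ_{δ_i}` with
`‖φ_{η₀ γ_j} - φ_{δ_i}‖ ≤ α`. The transformation `η₁ = δ_i γ_j⁻¹ ∈ 𝒯_a^{p,q}` differs from `η₀`
by a group element moving one atom of `p` (resp. of `q`) by at most `α`, hence, by transformation
inconsistency, moving every atom by at most `ρ α`, and `p` (resp. `q`) by at most `α ρ ‖c‖₁`
(resp. `α ρ ‖d‖₁`).
-/

/-- A finite family of (nonzero) vectors is `(ε, α)`-robustly linearly independent:
any linear combination of norm `< ε · ‖a‖₂` contains two vectors that nearly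
cancel each other after normalization. -/
def IsRLI {E : Type*} [NormedAddCommGroup E] [NormedSpace ℝ E] {n : ℕ}
    (w : Fin n → E) (ε α : ℝ) : Prop :=
  ∀ a : Fin n → ℝ, ‖∑ i, a i • w i‖ < ε * Real.sqrt (∑ i, a i ^ 2) →
    ∃ i j, a i ≠ 0 ∧ a j ≠ 0 ∧
      ‖‖a i • w i‖⁻¹ • (a i • w i) + ‖a j • w j‖⁻¹ • (a j • w j)‖ ≤ α

open scoped RealInnerProductSpace

section Normalize

variable {E : Type*} [NormedAddCommGroup E] [NormedSpace ℝ E] {w : E} {t : ℝ}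

lemma inv_norm_smul_smul_of_pos (hw : ‖w‖ = 1) (ht : 0 < t) : ‖t • w‖⁻¹ • (t • w) = w := by
  rw [norm_smul, hw, mul_one, Real.norm_eq_abs, abs_of_pos ht, smul_smul,
    inv_mul_cancel₀ ht.ne', one_smul]

lemma inv_norm_smul_smul_of_neg (hw : ‖w‖ = 1) (ht : t < 0) : ‖t • w‖⁻¹ • (t • w) = -w := by
  rw [norm_smul, hw, mul_one, Real.norm_eq_abs, abs_of_neg ht, smul_smul, inv_neg, neg_mul,
    inv_mul_cancel₀ ht.ne, neg_one_smul]

end Normalize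

section RLI

variable {E : Type*} [NormedAddCommGroup E] [InnerProductSpace ℝ E]

lemma sqrt_two_le_norm_add_of_inner_nonneg {u v : E} (hu : ‖u‖ = 1) (hv : ‖v‖ = 1)
    (h : 0 ≤ ⟪u, v⟫) : √2 ≤ ‖u + v‖ := by
  rw [← Real.sqrt_sq (norm_nonneg (u + v))]
  exact Real.sqrt_le_sqrt (by rw [norm_add_sq_real, hu, hv]; linarith)

variable {n : ℕ} {w : Fin n → E} {ε α : ℝ}

theorem IsRLI.exists_pos_neg_norm_sub_le (h : IsRLI w ε α) (hw : ∀ i, ‖w i‖ = 1)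
    (hpos : ∀ i j, 0 ≤ ⟪w i, w j⟫) (hα : α < √2) {a : Fin n → ℝ}
    (ha : ‖∑ i, a i • w i‖ < ε * √(∑ i, a i ^ 2)) :
    ∃ i j, 0 < a i ∧ a j < 0 ∧ ‖w i - w j‖ ≤ α := by
  obtain ⟨i, j, hi, hj, hij⟩ := h a ha
  have not_same_sign : ¬ ‖w i + w j‖ ≤ α := fun hle =>
    (hα.trans_le (sqrt_two_le_norm_add_of_inner_nonneg (hw i) (hw j) (hpos i j))).not_ge hle
  rcases hi.lt_or_gt with hi | hi <;> rcases hj.lt_or_gt with hj | hj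
  · rw [inv_norm_smul_smul_of_neg (hw i) hi, inv_norm_smul_smul_of_neg (hw j) hj, ← neg_add,
      norm_neg] at hij
    exact absurd hij not_same_sign
  · rw [inv_norm_smul_smul_of_neg (hw i) hi, inv_norm_smul_smul_of_pos (hw j) hj,
      neg_add_eq_sub] at hij
    exact ⟨j, i, hj, hi, hij⟩
  · rw [inv_norm_smul_smul_of_pos (hw i) hi, inv_norm_smul_smul_of_neg (hw j) hj,
      ← sub_eq_add_neg] at hij
    exact ⟨i, j, hi, hj, hij⟩
  · rw [inv_norm_smul_smul_of_pos (hw i) hi, inv_norm_smul_smul_of_pos (hw j) hj] at hij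
    exact absurd hij not_same_sign

theorem IsRLI.exists_norm_castAdd_sub_natAdd_le {m n : ℕ} {w : Fin (m + n) → E}
    (h : IsRLI w ε α) (hw : ∀ i, ‖w i‖ = 1) (hpos : ∀ i j, 0 ≤ ⟪w i, w j⟫) (hα : α < √2)
    {c : Fin m → ℝ} {d : Fin n → ℝ} (hc : ∀ i, 0 < c i) (hd : ∀ j, 0 < d j)
    (hcd : ‖∑ i, c i • w (Fin.castAdd n i) - ∑ j, d j • w (Fin.natAdd m j)‖ <
      ε * √(∑ i, c i ^ 2 + ∑ j, d j ^ 2)) :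
    ∃ i j, ‖w (Fin.castAdd n i) - w (Fin.natAdd m j)‖ ≤ α := by
  set a : Fin (m + n) → ℝ := Fin.append c (-d)
  have hsum : ∑ k, a k • w k = ∑ i, c i • w (Fin.castAdd n i) - ∑ j, d j • w (Fin.natAdd m j) := by
    simp [a, Fin.sum_univ_add, sub_eq_add_neg]
  have hsq : ∑ k, a k ^ 2 = ∑ i, c i ^ 2 + ∑ j, d j ^ 2 := by
    simp [a, Fin.sum_univ_add]
  obtain ⟨k, l, hk, hl, hkl⟩ := h.exists_pos_neg_norm_sub_le hw hpos hα (a := a)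
    (by rwa [hsum, hsq])
  induction k using Fin.addCases with
  | left i =>
    induction l using Fin.addCases with
    | left j => exact absurd (hc j) (by simpa [a] using hl.not_gt)
    | right j => exact ⟨i, j, hkl⟩
  | right i => exact absurd (hd i) (by simpa [a] using hk.not_gt)

end RLI

lemma norm_map_sum_smul_sub_le {E F ι : Type*} [NormedAddCommGroup E] [NormedSpace ℝ E]
    [FunLike F E E] [LinearMapClass F ℝ E E] [Fintype ι] (T : F) (x : ι → E) (c : ι → ℝ)
    {M : ℝ} (hM : ∀ k, ‖T (x k) - x k‖ ≤ M) :
    ‖T (∑ k, c k • x k) - ∑ k, c k • x k‖ ≤ (∑ k, |c k|) * M :=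
  calc ‖T (∑ k, c k • x k) - ∑ k, c k • x k‖ = ‖∑ k, c k • (T (x k) - x k)‖ := by
        simp only [map_sum, map_smul, smul_sub, Finset.sum_sub_distrib]
    _ ≤ ∑ k, ‖c k • (T (x k) - x k)‖ := norm_sum_le _ _
    _ ≤ ∑ k, |c k| * M := Finset.sum_le_sum fun k _ => by
        rw [norm_smul, Real.norm_eq_abs]
        exact mul_le_mul_of_nonneg_left (hM k) (abs_nonneg _)
    _ = (∑ k, |c k|) * M := (Finset.sum_mul ..).symm

section Representation

variable {H G : Type*} [NormedAddCommGroup H] [NormedSpace ℝ H] [Group G]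
  (U : G →* (H ≃ₗᵢ[ℝ] H))

lemma map_mul_apply (g h : G) (x : H) : U (g * h) x = U g (U h x) := by
  rw [map_mul, LinearIsometryEquiv.coe_mul, Function.comp_apply]

lemma norm_map_mul_sub_map_mul (k g h : G) (x : H) :
    ‖U (k * g) x - U (k * h) x‖ = ‖U g x - U h x‖ := by
  rw [map_mul_apply, map_mul_apply, ← map_sub, LinearIsometryEquiv.norm_map]

variable {U} {φ : H} {Td : Set G} {ρ α : ℝ}
  (hinc : ∀ γ' ∈ Td, ∀ γ'' ∈ Td, ∀ η : G,
    ‖U η (U γ'' φ) - U γ'' φ‖ ≤ ρ * ‖U η (U γ' φ) - U γ' φ‖)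
include hinc

lemma norm_map_sum_sub_le_of_inconsistency (hρ : 0 ≤ ρ) {ι : Type*} [Fintype ι] {γ : ι → G}
    (hγ : ∀ k, γ k ∈ Td) (c : ι → ℝ) {g γ₀ : G} (hγ₀ : γ₀ ∈ Td)
    (hg : ‖U g (U γ₀ φ) - U γ₀ φ‖ ≤ α) :
    ‖U g (∑ k, c k • U (γ k) φ) - ∑ k, c k • U (γ k) φ‖ ≤ α * ρ * ∑ k, |c k| :=
  (norm_map_sum_smul_sub_le (U g) _ c fun k =>
    (hinc _ hγ₀ _ (hγ k) g).trans (mul_le_mul_of_nonneg_left hg hρ)).trans_eq (by ring)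

lemma norm_map_mul_inv_sub_le_of_source (hρ : 0 ≤ ρ) {ι : Type*} [Fintype ι] {γ : ι → G}
    (hγ : ∀ k, γ k ∈ Td) (c : ι → ℝ) (q : H) (η₀ δ' : G) (j : ι)
    (hnear : ‖U (η₀ * γ j) φ - U δ' φ‖ ≤ α) :
    ‖U (δ' * (γ j)⁻¹) (∑ k, c k • U (γ k) φ) - q‖ ≤
      ‖U η₀ (∑ k, c k • U (γ k) φ) - q‖ + α * ρ * ∑ k, |c k| := by
  set p := ∑ k, c k • U (γ k) φ
  have hmove : ‖U (η₀⁻¹ * (δ' * (γ j)⁻¹)) (U (γ j) φ) - U (γ j) φ‖ ≤ α := by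
    have hg : η₀ * (η₀⁻¹ * (δ' * (γ j)⁻¹) * γ j) = δ' := by group
    rwa [← map_mul_apply, ← norm_map_mul_sub_map_mul U η₀, hg, norm_sub_rev]
  have hshift : ‖U (δ' * (γ j)⁻¹) p - U η₀ p‖ = ‖U (η₀⁻¹ * (δ' * (γ j)⁻¹)) p - p‖ := by
    rw [← norm_map_mul_sub_map_mul U η₀⁻¹, inv_mul_cancel, map_one, LinearIsometryEquiv.coe_one,
      id]
  calc ‖U (δ' * (γ j)⁻¹) p - q‖ ≤ ‖U η₀ p - q‖ + ‖U (δ' * (γ j)⁻¹) p - U η₀ p‖ :=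
        (norm_sub_le_norm_sub_add_norm_sub _ _ _).trans_eq (add_comm _ _)
    _ ≤ ‖U η₀ p - q‖ + α * ρ * ∑ k, |c k| := by
        rw [hshift]
        gcongr
        exact norm_map_sum_sub_le_of_inconsistency hinc hρ hγ c (hγ j) hmove

lemma norm_map_mul_inv_sub_le_of_target (hρ : 0 ≤ ρ) {ι : Type*} [Fintype ι] {δ : ι → G}
    (hδ : ∀ k, δ k ∈ Td) (d : ι → ℝ) (p : H) (η₀ γ' : G) (i : ι)
    (hnear : ‖U (η₀ * γ') φ - U (δ i) φ‖ ≤ α) :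
    ‖U (δ i * γ'⁻¹) p - ∑ k, d k • U (δ k) φ‖ ≤
      ‖U η₀ p - ∑ k, d k • U (δ k) φ‖ + α * ρ * ∑ k, |d k| := by
  set q := ∑ k, d k • U (δ k) φ
  set g := η₀ * (δ i * γ'⁻¹)⁻¹
  have hmove : ‖U g (U (δ i) φ) - U (δ i) φ‖ ≤ α := by
    have hg : g * δ i = η₀ * γ' := by simp only [g]; group
    rwa [← map_mul_apply, hg]
  have hshift : ‖U (δ i * γ'⁻¹) p - q‖ = ‖U η₀ p - U g q‖ := by
    rw [← LinearIsometryEquiv.norm_map (U g), map_sub, ← map_mul_apply, inv_mul_cancel_right]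
  calc ‖U (δ i * γ'⁻¹) p - q‖ ≤ ‖U η₀ p - q‖ + ‖U g q - q‖ := by
        rw [hshift, norm_sub_rev (U g q)]
        exact norm_sub_le_norm_sub_add_norm_sub _ _ _
    _ ≤ ‖U η₀ p - q‖ + α * ρ * ∑ k, |d k| := by
        gcongr
        exact norm_map_sum_sub_le_of_inconsistency hinc hρ hδ d (hδ i) hmove

end Representation

theorem stmt3_general {H G : Type*} [NormedAddCommGroup H] [InnerProductSpace ℝ H]
    [Group G] (U : G →* (H ≃ₗᵢ[ℝ] H)) (φ : H) (Td : Set G)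
    (hφ : ‖φ‖ = 1)
    (hpos : ∀ γ ∈ Td, ∀ δ ∈ Td, 0 ≤ (inner ℝ (U γ φ) (U δ φ) : ℝ))
    (K : ℕ)
    (γ δ : Fin K → G) (hγTd : ∀ i, γ i ∈ Td) (hδTd : ∀ i, δ i ∈ Td)
    (c d : Fin K → ℝ) (hc : ∀ i, 0 < c i) (hd : ∀ i, 0 < d i)
    (p q : H) (hp : p = ∑ i, c i • U (γ i) φ) (hq : q = ∑ i, d i • U (δ i) φ)
    (η₀ : G)
    (hη₀γ : ∀ i, η₀ * γ i ∈ Td)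
    (ε : ℝ)
    (hsmall : ‖U η₀ p - q‖ < ε * Real.sqrt (∑ i, c i ^ 2 + ∑ i, d i ^ 2))
    (α : ℝ) (hα : α < Real.sqrt 2)
    (hRLI : ∀ χ : Fin (2 * K) → G, (∀ i, χ i ∈ Td) →
      IsRLI (fun i => U (χ i) φ) ε α)
    (ρ : ℝ) (hρ0 : 0 ≤ ρ)
    (hinc : ∀ γ' ∈ Td, ∀ γ'' ∈ Td, ∀ η : G,
      ‖U η (U γ'' φ) - U γ'' φ‖ ≤ ρ * ‖U η (U γ' φ) - U γ' φ‖) :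
    sInf ((fun η => ‖U η p - q‖) '' {η : G | ∃ i j, η = δ i * (γ j)⁻¹})
      - ‖U η₀ p - q‖
      ≤ α * ρ * min (∑ i, |c i|) (∑ i, |d i|) := by
  rw [two_mul] at hRLI
  set χ : Fin (K + K) → G := Fin.append (fun k => η₀ * γ k) δ
  have hχ : ∀ k, χ k ∈ Td := Fin.addCases (motive := fun k => χ k ∈ Td)
    (by simpa only [χ, Fin.append_left] using hη₀γ) (by simpa only [χ, Fin.append_right] using hδTd)
  obtain ⟨j, i, hnear⟩ := (hRLI χ hχ).exists_norm_castAdd_sub_natAdd_le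
    (fun k => by rw [LinearIsometryEquiv.norm_map, hφ]) (fun k l => hpos _ (hχ k) _ (hχ l)) hα
    hc hd (by simpa only [χ, Fin.append_left, Fin.append_right, hp, hq, map_sum, map_smul,
      map_mul_apply] using hsmall)
  simp only [χ, Fin.append_left, Fin.append_right] at hnear
  have hinf : sInf ((fun η => ‖U η p - q‖) '' {η : G | ∃ i j, η = δ i * (γ j)⁻¹}) ≤
      ‖U (δ i * (γ j)⁻¹) p - q‖ :=
    csInf_le ⟨0, by rintro _ ⟨_, _, rfl⟩; exact norm_nonneg _⟩ ⟨_, ⟨i, j, rfl⟩, rfl⟩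
  have hsource := norm_map_mul_inv_sub_le_of_source hinc hρ0 hγTd c q η₀ (δ i) j hnear
  have htarget := norm_map_mul_inv_sub_le_of_target hinc hρ0 hδTd d p η₀ (γ j) i hnear
  rw [← hp] at hsource
  rw [← hq] at htarget
  rcases min_choice (∑ k, |c k|) (∑ k, |d k|) with h | h <;> rw [h] <;> linarith

/-- main theorem, bound on the registration error of the algorithm
in terms of the RLI parameter `α` and the transformation inconsistency `ρ`. -/
theorem stmt3 {H G : Type*} [NormedAddCommGroup H] [InnerProductSpace ℝ H]
    [Group G] (U : G →* (H ≃ₗᵢ[ℝ] H)) (φ : H) (Td : Set G)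
    (hφ : ‖φ‖ = 1) (hinj : Function.Injective fun γ : G => U γ φ)
    (hpos : ∀ γ ∈ Td, ∀ δ ∈ Td, 0 ≤ (inner ℝ (U γ φ) (U δ φ) : ℝ))
    (K : ℕ) (hK : 1 ≤ K)
    (γ δ : Fin K → G) (hγTd : ∀ i, γ i ∈ Td) (hδTd : ∀ i, δ i ∈ Td)
    (c d : Fin K → ℝ) (hc : ∀ i, 0 < c i) (hd : ∀ i, 0 < d i)
    (p q : H) (hp : p = ∑ i, c i • U (γ i) φ) (hq : q = ∑ i, d i • U (δ i) φ)
    (η₀ : G) (hopt : ∀ η : G, ‖U η₀ p - q‖ ≤ ‖U η p - q‖)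
    (hη₀γ : ∀ i, η₀ * γ i ∈ Td) (hη₀δ : ∀ i, η₀⁻¹ * δ i ∈ Td)
    (ε : ℝ) (hε : 0 < ε)
    (hsmall : ‖U η₀ p - q‖ < ε * Real.sqrt (∑ i, c i ^ 2 + ∑ i, d i ^ 2))
    (α : ℝ) (hα0 : 0 ≤ α) (hα : α < Real.sqrt 2)
    (hRLI : ∀ χ : Fin (2 * K) → G, (∀ i, χ i ∈ Td) →
      IsRLI (fun i => U (χ i) φ) ε α)
    (ρ : ℝ) (hρ0 : 0 ≤ ρ)
    (hinc : ∀ γ' ∈ Td, ∀ γ'' ∈ Td, ∀ η : G,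
      ‖U η (U γ'' φ) - U γ'' φ‖ ≤ ρ * ‖U η (U γ' φ) - U γ' φ‖) :
    sInf ((fun η => ‖U η p - q‖) '' {η : G | ∃ i j, η = δ i * (γ j)⁻¹})
      - ‖U η₀ p - q‖
      ≤ α * ρ * min (∑ i, |c i|) (∑ i, |d i|) :=
  stmt3_general U φ Td hφ hpos K γ δ hγTd hδTd c d hc hd p q hp hq η₀ hη₀γ ε hsmall α hα hRLI ρ hρ0
    hinc
end

section
/- Suppose the group G is commutative. Then for every φ ∈ H and all η, γ, γ' ∈ G, ‖U(η)(U(γ')φ) − U(γ')φ‖ = ‖U(η)(U(γ)φ) − U(γ)φ‖, and both sides equal ‖U(η)φ − φ‖. Consequently, the transformation inconsistency of any parametric dictionary built from a commutative transformation group equals 1. -/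
/-! Commutativity lets `U γ` be pulled out of `U η (U γ φ) - U γ φ`, and `U γ` preserves norms, so
the displacement of every atom `U γ φ` under `U η` has the norm of the displacement of `φ`. Hence every
ratio in the inconsistency set is `a / a ≤ 1` for a single `a`, and `1` is attained at an `η` that
moves `φ`. -/

theorem LinearIsometryEquiv.norm_apply_sub_self_of_commute {R E : Type*} [Semiring R]
    [SeminormedAddCommGroup E] [Module R E] {e f : E ≃ₗᵢ[R] E} (h : Commute e f) (x : E) :
    ‖e (f x) - f x‖ = ‖e x - x‖ := by
  have hef : e (f x) = f (e x) := congrArg (· x) h.eq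
  rw [hef, ← map_sub, f.norm_map]

theorem MonoidHom.norm_apply_sub_self_of_comm {G R E : Type*} [CommMonoid G] [Semiring R]
    [SeminormedAddCommGroup E] [Module R E] (U : G →* (E ≃ₗᵢ[R] E)) (η γ : G) (x : E) :
    ‖U η (U γ x) - U γ x‖ = ‖U η x - x‖ :=
  LinearIsometryEquiv.norm_apply_sub_self_of_commute ((Commute.all η γ).map U) x

/-- for a commutative transformation group, a transformation acts
on all atoms identically in norm, and the transformation inconsistency of any
parametric dictionary equals 1. -/
theorem stmt6 {H G : Type*} [NormedAddCommGroup H] [InnerProductSpace ℝ H]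
    [CommGroup G] (U : G →* (H ≃ₗᵢ[ℝ] H)) (φ : H) :
    (∀ η γ γ' : G,
      ‖U η (U γ' φ) - U γ' φ‖ = ‖U η (U γ φ) - U γ φ‖ ∧
      ‖U η (U γ φ) - U γ φ‖ = ‖U η φ - φ‖) ∧
    (∀ Td : Set G, Td.Nonempty → (∃ η : G, η ≠ 1 ∧ U η φ ≠ φ) →
      sSup {r : ℝ | ∃ γ ∈ Td, ∃ γ' ∈ Td, ∃ η : G, η ≠ 1 ∧
        r = ‖U η (U γ' φ) - U γ' φ‖ / ‖U η (U γ φ) - U γ φ‖} = 1) := by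
  have key := U.norm_apply_sub_self_of_comm (R := ℝ)
  refine ⟨fun η γ γ' => ⟨by rw [key, key], key η γ φ⟩, ?_⟩
  rintro Td ⟨γ₀, hγ₀⟩ ⟨η₀, hη₀, hmoves⟩
  refine IsGreatest.csSup_eq ⟨⟨γ₀, hγ₀, γ₀, hγ₀, η₀, hη₀, ?_⟩, ?_⟩
  · rw [key, div_self (norm_ne_zero_iff.mpr (sub_ne_zero.mpr hmoves))]
  · rintro r ⟨γ, -, γ', -, η, -, rfl⟩
    rw [key, key]
    exact div_self_le_one _
end

section
/- Let K ≥ 1 and let a ∈ ℝ^K with ‖a‖₂ = 1. Then there exists an index i ∈ {1, …, K} such that |a_i| ≥ 2^{i−1} · √(3/(4^K − 1)). -/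
/-! The squares of the thresholds `bᵢ = 2^i · √(3/(4^K − 1))` form a geometric series summing to
`1 = ∑ aᵢ²`, so the termwise comparison `bᵢ² ≤ aᵢ²` cannot fail for every `i`. -/

open Finset

lemma Finset.exists_le_abs_of_sum_sq_le {ι : Type*} {s : Finset ι} (hs : s.Nonempty)
    {a b : ι → ℝ} (h : ∑ i ∈ s, b i ^ 2 ≤ ∑ i ∈ s, a i ^ 2) : ∃ i ∈ s, b i ≤ |a i| := by
  obtain ⟨i, hi, hle⟩ := exists_le_of_sum_le hs h
  exact ⟨i, hi, (le_abs_self _).trans (sq_le_sq.mp hle)⟩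

lemma sum_fin_four_pow (K : ℕ) : ∑ i : Fin K, (4 : ℝ) ^ (i : ℕ) = (4 ^ K - 1) / 3 := by
  rw [Fin.sum_univ_eq_sum_range, geom_sum_eq (by norm_num)]
  ring

lemma sum_fin_sq_two_pow_mul_sqrt (K : ℕ) (hK : K ≠ 0) :
    ∑ i : Fin K, (2 ^ (i : ℕ) * Real.sqrt (3 / (4 ^ K - 1))) ^ 2 = 1 := by
  have hpos : (0 : ℝ) < 4 ^ K - 1 := by
    linarith [one_lt_pow₀ (by norm_num : (1 : ℝ) < 4) hK]
  have hsq (i : ℕ) : (2 ^ i * Real.sqrt (3 / (4 ^ K - 1))) ^ 2 = 4 ^ i * (3 / (4 ^ K - 1)) := by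
    rw [mul_pow, Real.sq_sqrt (by positivity), ← pow_mul, pow_mul']
    norm_num
  simp only [hsq, ← sum_mul, sum_fin_four_pow]
  field_simp

theorem stmt11_general (K : ℕ) (a : Fin K → ℝ)
    (ha : Real.sqrt (∑ i, a i ^ 2) = 1) :
    ∃ i : Fin K, 2 ^ (i : ℕ) * Real.sqrt (3 / (4 ^ K - 1)) ≤ |a i| := by
  have hsum : ∑ i, a i ^ 2 = 1 := Real.sqrt_eq_one.mp ha
  have hK : K ≠ 0 := by
    rintro rfl
    simp at hsum
  have : NeZero K := ⟨hK⟩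
  obtain ⟨i, -, hi⟩ := exists_le_abs_of_sum_sq_le univ_nonempty
    (b := fun i : Fin K ↦ 2 ^ (i : ℕ) * Real.sqrt (3 / (4 ^ K - 1))) (a := a)
    (by rw [sum_fin_sq_two_pow_mul_sqrt K hK, hsum])
  exact ⟨i, hi⟩

/-- every unit vector `a ∈ ℝ^K` has a coordinate `i` (0-indexed)
with `|a_i| ≥ 2^i · √(3/(4^K − 1))`. -/
theorem stmt11 (K : ℕ) (hK : 1 ≤ K) (a : Fin K → ℝ)
    (ha : Real.sqrt (∑ i, a i ^ 2) = 1) :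
    ∃ i : Fin K, 2 ^ (i : ℕ) * Real.sqrt (3 / (4 ^ K - 1)) ≤ |a i| :=
  stmt11_general K a ha
end

section
/- Let K ≥ 1, set Y = √(3/(4^K − 1)), and let ε satisfy 0 < ε < Y. Let τ_1 < τ_2 < … < τ_K be real numbers and let a ∈ ℝ^K with ‖a‖₂ = 1 and ‖Σ_{i=1}^K a_i v_{τ_i}‖₂ < ε. Let i* be the smallest index with |a_{i*}| ≥ 2^{i*−1} Y (such an index exists). Then there exists an index j ∈ {1, …, K} with τ_{i*} < τ_j ≤ τ_{i*} + 1 and a_j · a_{i*} < 0. -/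
/-!
Write `f = ∑ a_i v_{τ_i}` and suppose every box starting in `(τ_{i*}, τ_{i*} + 1]` has a
coefficient of the same sign as `a_{i*}` (or zero). At a point `t` of that interval the boxes of
index `> i*` containing `t` then push `f t` in the direction of `a_{i*}`, while those of index
`< i*` contribute at most `∑_{i < i*} 2^i Y = (2^{i*} - 1) Y` in absolute value. Hence
`|f t| ≥ 2^{i*} Y - (2^{i*} - 1) Y = Y` on an interval of length one, so `‖f‖₂ ≥ Y > ε`.
-/

noncomputable def boxFn (τ : ℝ) : ℝ → ℝ :=
  Set.indicator (Set.Icc τ (τ + 1)) fun _ => 1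

noncomputable def L2norm (f : ℝ → ℝ) : ℝ := Real.sqrt (∫ t, f t ^ 2)

open MeasureTheory Finset
open scoped ENNReal

lemma abs_boxFn_le_one (τ t : ℝ) : |boxFn τ t| ≤ 1 := by
  unfold boxFn
  by_cases h : t ∈ Set.Icc τ (τ + 1) <;> simp [h]

lemma memLp_boxFn (τ : ℝ) (p : ℝ≥0∞) : MemLp (boxFn τ) p volume :=
  memLp_indicator_const p measurableSet_Icc 1 (Or.inr measure_Icc_lt_top.ne)

lemma integrable_sq_sum_mul_boxFn {ι : Type*} (s : Finset ι) (a τ : ι → ℝ) :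
    Integrable (fun t => (∑ i ∈ s, a i * boxFn (τ i) t) ^ 2) :=
  (memLp_finsetSum s fun i _ => (memLp_boxFn (τ i) 2).const_mul (a i)).integrable_sq

lemma sq_mul_measureReal_le_integral_sq {α : Type*} [MeasurableSpace α] {μ : Measure α}
    {f : α → ℝ} {s : Set α} {Y : ℝ} (hs : MeasurableSet s) (hμs : μ s ≠ ∞)
    (hf : Integrable (fun x => f x ^ 2) μ) (hY : 0 ≤ Y) (hle : ∀ x ∈ s, Y ≤ |f x|) :
    Y ^ 2 * μ.real s ≤ ∫ x, f x ^ 2 ∂μ :=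
  calc Y ^ 2 * μ.real s = ∫ _ in s, Y ^ 2 ∂μ := by rw [setIntegral_const, smul_eq_mul, mul_comm]
    _ ≤ ∫ x in s, f x ^ 2 ∂μ :=
      setIntegral_mono_on (integrableOn_const hμs) hf.integrableOn hs fun x hx => by
        simpa only [sq_abs] using pow_le_pow_left₀ hY (hle x hx) 2
    _ ≤ ∫ x, f x ^ 2 ∂μ := setIntegral_le_integral hf (.of_forall fun _ => sq_nonneg _)

lemma sum_Iio_two_pow {K : ℕ} (k : Fin K) : ∑ i ∈ Iio k, (2 : ℝ) ^ (i : ℕ) = 2 ^ (k : ℕ) - 1 :=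
  calc ∑ i ∈ Iio k, (2 : ℝ) ^ (i : ℕ) = ∑ n ∈ (Iio k).map Fin.valEmbedding, (2 : ℝ) ^ n :=
        (sum_map (Iio k) Fin.valEmbedding fun n => (2 : ℝ) ^ n).symm
    _ = 2 ^ (k : ℕ) - 1 := by
      rw [Fin.map_valEmbedding_Iio, Nat.Iio_eq_range, geom_sum_eq (by norm_num)]
      norm_num

lemma abs_le_abs_add_sum_of_mul_nonneg {ι : Type*} (s : Finset ι) (c : ℝ) (b : ι → ℝ)
    (h : ∀ i ∈ s, 0 ≤ b i * c) : |c| ≤ |c + ∑ i ∈ s, b i| := by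
  rcases eq_or_ne c 0 with rfl | hc
  · simp
  refine le_of_mul_le_mul_left ?_ (abs_pos.2 hc)
  have : 0 ≤ ∑ i ∈ s, b i * c := sum_nonneg h
  calc |c| * |c| = c * c := abs_mul_abs_self c
    _ ≤ c * (c + ∑ i ∈ s, b i) := by rw [mul_add, mul_sum]; simp only [mul_comm c]; linarith
    _ ≤ |c| * |c + ∑ i ∈ s, b i| := by rw [← abs_mul]; exact le_abs_self _

lemma univ_sum_eq_sum_Iio_add_sum_Ici {M : Type*} [AddCommMonoid M] {K : ℕ} (k : Fin K)
    (g : Fin K → M) : ∑ i, g i = ∑ i ∈ Iio k, g i + ∑ i ∈ Ici k, g i := by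
  rw [← sum_filter_add_sum_filter_not univ (· < k), filter_gt_eq_Iio]
  simp_rw [not_lt, filter_le_eq_Ici]

lemma le_abs_sum_mul_boxFn {K : ℕ} {τ : Fin K → ℝ} (hτ : StrictMono τ) {a : Fin K → ℝ}
    {Y : ℝ} {k : Fin K} (hk : 2 ^ (k : ℕ) * Y ≤ |a k|) (hlt : ∀ i < k, |a i| ≤ 2 ^ (i : ℕ) * Y)
    (hsign : ∀ j, τ k < τ j → τ j ≤ τ k + 1 → 0 ≤ a j * a k) {t : ℝ}
    (ht : t ∈ Set.Ioc (τ k) (τ k + 1)) :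
    Y ≤ |∑ i, a i * boxFn (τ i) t| := by
  have hk_box : boxFn (τ k) t = 1 := Set.indicator_of_mem (Set.Ioc_subset_Icc_self ht) _
  have hsplit : ∑ i, a i * boxFn (τ i) t =
      ∑ i ∈ Iio k, a i * boxFn (τ i) t + (a k + ∑ i ∈ Ioi k, a i * boxFn (τ i) t) := by
    rw [univ_sum_eq_sum_Iio_add_sum_Ici k, ← add_sum_Ioi_eq_sum_Ici, hk_box, mul_one]
  have hbelow : |∑ i ∈ Iio k, a i * boxFn (τ i) t| ≤ (2 ^ (k : ℕ) - 1) * Y :=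
    calc |∑ i ∈ Iio k, a i * boxFn (τ i) t| ≤ ∑ i ∈ Iio k, 2 ^ (i : ℕ) * Y := by
          refine (abs_sum_le_sum_abs _ _).trans (sum_le_sum fun i hi => ?_)
          rw [abs_mul]
          exact (mul_le_of_le_one_right (abs_nonneg _) (abs_boxFn_le_one _ _)).trans
            (hlt i (mem_Iio.1 hi))
      _ = (2 ^ (k : ℕ) - 1) * Y := by rw [← sum_mul, sum_Iio_two_pow]
  have habove : |a k| ≤ |a k + ∑ i ∈ Ioi k, a i * boxFn (τ i) t| := by
    refine abs_le_abs_add_sum_of_mul_nonneg _ _ _ fun j hj => ?_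
    by_cases hm : t ∈ Set.Icc (τ j) (τ j + 1)
    · rw [boxFn, Set.indicator_of_mem hm, mul_one]
      exact hsign j (hτ (mem_Ioi.1 hj)) (hm.1.trans ht.2)
    · simp [boxFn, Set.indicator_of_notMem hm]
  set below := ∑ i ∈ Iio k, a i * boxFn (τ i) t
  set above := a k + ∑ i ∈ Ioi k, a i * boxFn (τ i) t
  have htri := abs_add_le (-below) (below + above)
  rw [neg_add_cancel_left, abs_neg] at htri
  rw [hsplit]
  linarith

/-- Indices are 0-based, so the paper's bound `2^{i−1} Y` reads `2^i Y` here. -/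
theorem stmt12_general (K : ℕ) (Y ε : ℝ)
    (hε : 0 < ε) (hεY : ε < Y)
    (τ : Fin K → ℝ) (hτ : StrictMono τ)
    (a : Fin K → ℝ)
    (hsmall : L2norm (fun t => ∑ i, a i * boxFn (τ i) t) < ε)
    (istar : Fin K) (histar : 2 ^ (istar : ℕ) * Y ≤ |a istar|)
    (hmin : ∀ i : Fin K, i < istar → |a i| < 2 ^ (i : ℕ) * Y) :
    ∃ j : Fin K, τ istar < τ j ∧ τ j ≤ τ istar + 1 ∧ a j * a istar < 0 := by
  by_contra! hsign
  have hbound : Y ^ 2 ≤ ∫ t, (∑ i, a i * boxFn (τ i) t) ^ 2 := by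
    simpa using sq_mul_measureReal_le_integral_sq measurableSet_Ioc (by simp)
      (integrable_sq_sum_mul_boxFn _ a τ) (hε.trans hεY).le
      fun t ht => le_abs_sum_mul_boxFn hτ histar (fun i hi => (hmin i hi).le) hsign ht
  have hnorm : ∫ t, (∑ i, a i * boxFn (τ i) t) ^ 2 < ε ^ 2 := (Real.sqrt_lt' hε).1 hsmall
  nlinarith

/-- if a unit-coefficient combination of box functions has small
`L²` norm, there is a box starting in `(τ_{i*}, τ_{i*} + 1]` whose coefficient
has a sign opposite to that of `a_{i*}`. Indices are 0-based, so the paper's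
`2^{i−1}` bound reads `2^i` here. -/
theorem stmt12 (K : ℕ) (hK : 1 ≤ K) (Y ε : ℝ)
    (hY : Y = Real.sqrt (3 / (4 ^ K - 1)))
    (hε : 0 < ε) (hεY : ε < Y)
    (τ : Fin K → ℝ) (hτ : StrictMono τ)
    (a : Fin K → ℝ) (ha : Real.sqrt (∑ i, a i ^ 2) = 1)
    (hsmall : L2norm (fun t => ∑ i, a i * boxFn (τ i) t) < ε)
    (istar : Fin K) (histar : 2 ^ (istar : ℕ) * Y ≤ |a istar|)
    (hmin : ∀ i : Fin K, i < istar → |a i| < 2 ^ (i : ℕ) * Y) :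
    ∃ j : Fin K, τ istar < τ j ∧ τ j ≤ τ istar + 1 ∧ a j * a istar < 0 :=
  stmt12_general K Y ε hε hεY τ hτ a hsmall istar histar hmin
end

section
/- Let ρ ≥ 0 and suppose that for all γ, γ' ∈ 𝒯_d and all η ∈ G, ‖U(η)φ_{γ'} − φ_{γ'}‖ ≤ ρ · ‖U(η)φ_γ − φ_γ‖ (the transformation inconsistency of the dictionary is at most ρ). Then for every η₀ ∈ G and all indices i*, j* ∈ {1, …, K}, inf_{η ∈ 𝒯_a^{p,q}} ‖U(η)p − q‖ ≤ ‖U(η₀)p − q‖ + ρ · ‖φ_{δ_{j*}} − U(η₀)φ_{γ_{i*}}‖ · Σ_{i=1}^K |c_i|. -/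
/-! The transformation `η = δ_{j*} γ_{i*}⁻¹` lies in `𝒯_a^{p,q}` and differs from `η₀` by
`η' = η₀⁻¹ η`. Moving `p` by `η` instead of `η₀` costs `‖U(η')p - p‖`, which is at most
`Σ |c_i| ‖U(η')φ_{γ_i} - φ_{γ_i}‖`. By the inconsistency bound each term is at most `ρ` times
the displacement of the atom `φ_{γ_{i*}}`, and `U(η)` sends that atom exactly onto `φ_{δ_{j*}}`. -/

open Finset

theorem norm_map_sum_smul_sub_le_s16 {𝕜 E ι : Type*} [NormedField 𝕜] [SeminormedAddCommGroup E]
    [NormedSpace 𝕜 E] (T : E →ₗ[𝕜] E) (s : Finset ι) (c : ι → 𝕜) (x : ι → E) :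
    ‖T (∑ i ∈ s, c i • x i) - ∑ i ∈ s, c i • x i‖ ≤ ∑ i ∈ s, ‖c i‖ * ‖T (x i) - x i‖ := by
  have hsum : T (∑ i ∈ s, c i • x i) - ∑ i ∈ s, c i • x i = ∑ i ∈ s, c i • (T (x i) - x i) := by
    simp only [map_sum, map_smul, smul_sub, sum_sub_distrib]
  rw [hsum]
  exact (norm_sum_le _ _).trans_eq (sum_congr rfl fun i _ => norm_smul _ _)

section Representation

variable {G E : Type*} [Group G] [SeminormedAddCommGroup E] [NormedSpace ℝ E]
  (U : G →* (E ≃ₗᵢ[ℝ] E))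

theorem map_apply_map_apply (a b : G) (x : E) : U a (U b x) = U (a * b) x := by
  rw [map_mul]
  rfl

theorem norm_map_sub_map_eq_norm_map_inv_mul_sub (a b : G) (x : E) :
    ‖U a x - U b x‖ = ‖U (b⁻¹ * a) x - x‖ := by
  rw [← (U b).norm_map (U (b⁻¹ * a) x - x), map_sub, map_apply_map_apply, mul_inv_cancel_left]

end Representation

theorem stmt16_general {H G : Type*} [NormedAddCommGroup H] [InnerProductSpace ℝ H]
    [Group G] (U : G →* (H ≃ₗᵢ[ℝ] H)) (φ : H) (Td : Set G)
    (K : ℕ)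
    (γ δ : Fin K → G) (hγTd : ∀ i, γ i ∈ Td)
    (c : Fin K → ℝ)
    (p q : H) (hp : p = ∑ i, c i • U (γ i) φ)
    (ρ : ℝ)
    (hinc : ∀ γ' ∈ Td, ∀ γ'' ∈ Td, ∀ η : G,
      ‖U η (U γ'' φ) - U γ'' φ‖ ≤ ρ * ‖U η (U γ' φ) - U γ' φ‖) :
    ∀ (η₀ : G) (istar jstar : Fin K),
      sInf ((fun η => ‖U η p - q‖) '' {η : G | ∃ i j, η = δ i * (γ j)⁻¹})
        ≤ ‖U η₀ p - q‖
          + ρ * ‖U (δ jstar) φ - U η₀ (U (γ istar) φ)‖ * ∑ i, |c i| := by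
  intro η₀ istar jstar
  set η := δ jstar * (γ istar)⁻¹
  have hatom : U η (U (γ istar) φ) = U (δ jstar) φ := by
    rw [map_apply_map_apply, inv_mul_cancel_right]
  have hmove : ‖U η p - U η₀ p‖ ≤ ρ * ‖U (δ jstar) φ - U η₀ (U (γ istar) φ)‖ * ∑ i, |c i| := by
    rw [norm_map_sub_map_eq_norm_map_inv_mul_sub, ← hatom,
      norm_map_sub_map_eq_norm_map_inv_mul_sub, hp, mul_comm, sum_mul]
    refine (norm_map_sum_smul_sub_le_s16 (U (η₀⁻¹ * η)).toLinearEquiv.toLinearMap _ _ _).trans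
      (sum_le_sum fun i _ => ?_)
    rw [Real.norm_eq_abs]
    exact mul_le_mul_of_nonneg_left (hinc _ (hγTd istar) _ (hγTd i) _) (abs_nonneg _)
  have hbdd : BddBelow ((fun η => ‖U η p - q‖) '' {η : G | ∃ i j, η = δ i * (γ j)⁻¹}) :=
    ⟨0, by rintro _ ⟨_, -, rfl⟩; exact norm_nonneg _⟩
  calc _ ≤ ‖U η p - q‖ := csInf_le hbdd ⟨η, ⟨jstar, istar, rfl⟩, rfl⟩
    _ ≤ ‖U η p - U η₀ p‖ + ‖U η₀ p - q‖ := norm_sub_le_norm_sub_add_norm_sub _ _ _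
    _ ≤ _ := by linarith

/-- intermediate bound in the proof of the main theorem. If the
transformation inconsistency of the dictionary is at most `ρ`, the approximate
distance is controlled by the distance at `η₀` plus `ρ` times the mismatch of a
single pair of atoms, scaled by `‖c‖₁`. -/
theorem stmt16 {H G : Type*} [NormedAddCommGroup H] [InnerProductSpace ℝ H]
    [Group G] (U : G →* (H ≃ₗᵢ[ℝ] H)) (φ : H) (Td : Set G)
    (K : ℕ) (hK : 1 ≤ K)
    (γ δ : Fin K → G) (hγTd : ∀ i, γ i ∈ Td) (hδTd : ∀ i, δ i ∈ Td)
    (c d : Fin K → ℝ)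
    (p q : H) (hp : p = ∑ i, c i • U (γ i) φ) (hq : q = ∑ i, d i • U (δ i) φ)
    (ρ : ℝ) (hρ0 : 0 ≤ ρ)
    (hinc : ∀ γ' ∈ Td, ∀ γ'' ∈ Td, ∀ η : G,
      ‖U η (U γ'' φ) - U γ'' φ‖ ≤ ρ * ‖U η (U γ' φ) - U γ' φ‖) :
    ∀ (η₀ : G) (istar jstar : Fin K),
      sInf ((fun η => ‖U η p - q‖) '' {η : G | ∃ i j, η = δ i * (γ j)⁻¹})
        ≤ ‖U η₀ p - q‖
          + ρ * ‖U (δ jstar) φ - U η₀ (U (γ istar) φ)‖ * ∑ i, |c i| :=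
  stmt16_general U φ Td K γ δ hγTd c p q hp ρ hinc
end
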